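/- (Unbiasedness of the IPTW estimating function, stratified HRMSM) Suppose consistency, temporal ordering, SRA, and positivity hold, and suppose the HRMSM is correctly specified: E[Y_{ā(t-s+1,t)}(t+1) | V(t-s+1)] = m_t(ā(t-s+1,t), V(t-s+1) | β*) for all regimens ā(t-s+1,t), where V(t-s+1) is a function of (Ā(t-s), L̄(t-s+1)). Then for every bounded function h of (Ā(t-s+1,t), V(t-s+1)), the IPTW estimating function has mean zero at β*: E[ h(Ā(t-s+1,t), V(t-s+1)) · (Y(t+1) − m_t(Ā(t-s+1,t), V(t-s+1) | β*)) / ∏_{j=t-s+1}^{t} g(A(j) | Ā(j-1), L̄(j)) ] = 0. -/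

import Mathlib

open Finset
open scoped Classical

noncomputable section

def pr {Ω : Type} [Fintype Ω] (μ : Ω → ℝ) (E : Ω → Prop) : ℝ :=
  ∑ ω, if E ω then μ ω else 0

def cpr {Ω : Type} [Fintype Ω] (μ : Ω → ℝ) (E F : Ω → Prop) : ℝ :=
  pr μ (fun ω => E ω ∧ F ω) / pr μ F

def ex {Ω : Type} [Fintype Ω] (μ : Ω → ℝ) (f : Ω → ℝ) : ℝ :=
  ∑ ω, f ω * μ ω

def cex {Ω : Type} [Fintype Ω] (μ : Ω → ℝ) (f : Ω → ℝ) (F : Ω → Prop) : ℝ :=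
  (∑ ω, if F ω then f ω * μ ω else 0) / pr μ F

/-!
Fix the treatments `p` on the window `[t-s+1, t]`. Where the observed treatments follow `p`,
consistency and temporal ordering identify `Y(t+1)` with the counterfactual `Y_p(t+1)`, so the
estimating function is `W · h(p, V) (Y_p(t+1) - m(p, V))` with `W = ∏ⱼ 1{A(j) = p j} / g_j`.
The factors of `W` are removed one at a time, the last first: given the history at time `j`,
`A(j)` is independent of the whole counterfactual process (SRA), so
`E[1{A(j) = p j} F / g_j] = E[F]` for every `F` determined by that history and the
counterfactuals, positivity keeping `g_j` away from zero. What remains,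
`E[h(p, V) (Y_p(t+1) - m(p, V))]`, vanishes on every stratum of `V` by the model equation.
-/

section FiniteProbability

variable {Ω α β γ : Type} [Fintype Ω] {μ : Ω → ℝ}

lemma pr_nonneg (hμ : ∀ ω, 0 ≤ μ ω) (E : Ω → Prop) : 0 ≤ pr μ E :=
  sum_nonneg fun ω _ => by split_ifs <;> simp [hμ ω]

lemma pr_mono (hμ : ∀ ω, 0 ≤ μ ω) {E F : Ω → Prop} (h : ∀ ω, E ω → F ω) :
    pr μ E ≤ pr μ F :=
  sum_le_sum fun ω _ => by split_ifs <;> simp_all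

lemma pr_eq_zero_of_imp (hμ : ∀ ω, 0 ≤ μ ω) {E F : Ω → Prop} (hF : pr μ F = 0)
    (h : ∀ ω, E ω → F ω) : pr μ E = 0 :=
  le_antisymm (hF ▸ pr_mono hμ h) (pr_nonneg hμ E)

lemma exists_pos_of_pr_pos {E : Ω → Prop} (h : 0 < pr μ E) : ∃ ω, E ω ∧ 0 < μ ω := by
  obtain ⟨ω, -, hω⟩ := exists_lt_of_sum_lt (s := univ) (f := fun _ => (0 : ℝ))
    (by simpa [pr] using h)
  by_cases hE : E ω
  · exact ⟨ω, hE, by simpa [hE] using hω⟩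
  · simp [hE] at hω

lemma pr_and_eq_cpr_mul (E : Ω → Prop) {F : Ω → Prop} (hF : pr μ F ≠ 0) :
    pr μ (fun ω => E ω ∧ F ω) = cpr μ E F * pr μ F :=
  (div_mul_cancel₀ _ hF).symm

lemma ex_ite_eq_mul_pr {E : Ω → Prop} {f : Ω → ℝ} {c : ℝ} (h : ∀ ω, E ω → f ω = c) :
    ex μ (fun ω => if E ω then f ω else 0) = c * pr μ E := by
  simp only [ex, pr, mul_sum]
  exact sum_congr rfl fun ω _ => by split_ifs with hE <;> simp [h ω, hE]

lemma ex_ite_eq_cex_mul_pr (hμ : ∀ ω, 0 ≤ μ ω) (f : Ω → ℝ) (F : Ω → Prop) :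
    ex μ (fun ω => if F ω then f ω else 0) = cex μ f F * pr μ F := by
  by_cases hF : pr μ F = 0
  · have hμF : ∀ ω, F ω → μ ω = 0 := fun ω hω => by
      simpa [hω] using (sum_eq_zero_iff_of_nonneg fun ω _ => by
        split_ifs <;> simp [hμ ω]).mp hF ω (mem_univ ω)
    rw [hF, mul_zero]
    exact sum_eq_zero fun ω _ => by by_cases hω : F ω <;> simp [hμF ω, hω]
  · simp only [cex, div_mul_cancel₀ _ hF, ex, ite_mul, zero_mul]

lemma ex_eq_of_fiberwise [DecidableEq β] (d : Ω → β) {f g : Ω → ℝ}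
    (h : ∀ ω₀, ex μ (fun ω => if d ω = d ω₀ then f ω else 0) =
      ex μ (fun ω => if d ω = d ω₀ then g ω else 0)) :
    ex μ f = ex μ g := by
  have fiberwise : ∀ f : Ω → ℝ, ex μ f =
      ∑ b ∈ univ.image d, ex μ (fun ω => if d ω = b then f ω else 0) := fun f => by
    simp only [ex, ite_mul, zero_mul, ← sum_filter]
    exact (sum_fiberwise_of_maps_to (fun ω _ => mem_image_of_mem d (mem_univ ω)) _).symm
  rw [fiberwise f, fiberwise g]
  refine sum_congr rfl fun b hb => ?_
  obtain ⟨ω₀, -, rfl⟩ := mem_image.mp hb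
  exact h ω₀

lemma ex_eq_zero_of_fiberwise [DecidableEq β] (d : Ω → β) {f : Ω → ℝ}
    (h : ∀ ω₀, ex μ (fun ω => if d ω = d ω₀ then f ω else 0) = 0) : ex μ f = 0 := by
  simpa [ex] using ex_eq_of_fiberwise (g := fun _ => 0) d (by simpa [ex] using h)

lemma ex_mul_sub_eq_zero_of_cex_eq {𝒱 : Type} (hμ : ∀ ω, 0 ≤ μ ω) {V : Ω → 𝒱} {Y : Ω → ℝ}
    {m : 𝒱 → ℝ} (c : 𝒱 → ℝ)
    (hm : ∀ v, 0 < pr μ (fun ω => V ω = v) → cex μ Y (fun ω => V ω = v) = m v) :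
    ex μ (fun ω => c (V ω) * (Y ω - m (V ω))) = 0 := by
  refine ex_eq_zero_of_fiberwise V fun ω₀ => ?_
  have hY : ex μ (fun ω => if V ω = V ω₀ then Y ω else 0) =
      m (V ω₀) * pr μ (fun ω => V ω = V ω₀) := by
    rw [ex_ite_eq_cex_mul_pr hμ]
    rcases (pr_nonneg hμ (fun ω => V ω = V ω₀)).eq_or_lt with h0 | hpos
    · simp [← h0]
    · rw [hm _ hpos]
  calc ex μ (fun ω => if V ω = V ω₀ then c (V ω) * (Y ω - m (V ω)) else 0)
      = c (V ω₀) * (ex μ (fun ω => if V ω = V ω₀ then Y ω else 0) -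
          m (V ω₀) * pr μ (fun ω => V ω = V ω₀)) := by
        simp only [ex, pr, mul_sum, ← sum_sub_distrib]
        refine sum_congr rfl fun ω _ => ?_
        split_ifs with hω
        · rw [hω]; ring
        · simp
    _ = 0 := by rw [hY, sub_self, mul_zero]

theorem ex_ite_div_cpr_eq_ex (hμ : ∀ ω, 0 ≤ μ ω) {a : Ω → α} {H : Ω → β} {X : Ω → γ} {α₀ : α}
    (hind : ∀ ω₀, 0 < pr μ (fun ω => H ω = H ω₀) →
      cpr μ (fun ω => a ω = α₀ ∧ X ω = X ω₀) (fun ω => H ω = H ω₀) =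
        cpr μ (fun ω => a ω = α₀) (fun ω => H ω = H ω₀) *
          cpr μ (fun ω => X ω = X ω₀) (fun ω => H ω = H ω₀))
    (hpos : ∀ ω, 0 < μ ω → 0 < cpr μ (fun ω' => a ω' = α₀) (fun ω' => H ω' = H ω))
    {f : Ω → ℝ} (hf : ∀ ω ω', H ω = H ω' → X ω = X ω' → f ω = f ω') :
    ex μ (fun ω => if a ω = α₀ then f ω / cpr μ (fun ω' => a ω' = a ω) (fun ω' => H ω' = H ω)
      else 0) = ex μ f := by
  refine ex_eq_of_fiberwise (fun ω => (H ω, X ω)) fun ω₀ => ?_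
  set g := cpr μ (fun ω => a ω = α₀) (fun ω => H ω = H ω₀) with hg_def
  have lhs : ex μ (fun ω => if (H ω, X ω) = (H ω₀, X ω₀) then
        (if a ω = α₀ then f ω / cpr μ (fun ω' => a ω' = a ω) (fun ω' => H ω' = H ω) else 0)
        else 0) =
      f ω₀ / g * pr μ (fun ω => (a ω = α₀ ∧ X ω = X ω₀) ∧ H ω = H ω₀) := by
    rw [← ex_ite_eq_mul_pr (f := fun ω => f ω / cpr μ (fun ω' => a ω' = a ω) (fun ω' => H ω' = H ω))
      fun ω ⟨⟨ha, hX⟩, hH⟩ => by rw [hf ω ω₀ hH hX, ha, hH]]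
    congr 1
    funext ω
    by_cases ha : a ω = α₀ <;> by_cases hH : H ω = H ω₀ <;> by_cases hX : X ω = X ω₀ <;>
      simp [ha, hH, hX]
  have rhs : ex μ (fun ω => if (H ω, X ω) = (H ω₀, X ω₀) then f ω else 0) =
      f ω₀ * pr μ (fun ω => X ω = X ω₀ ∧ H ω = H ω₀) := by
    rw [← ex_ite_eq_mul_pr fun ω ⟨hX, hH⟩ => hf ω ω₀ hH hX]
    simp only [Prod.mk.injEq, and_comm]
  rw [lhs, rhs]
  rcases (pr_nonneg hμ (fun ω => H ω = H ω₀)).eq_or_lt with h0 | hpos₀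
  · rw [pr_eq_zero_of_imp hμ h0.symm fun ω h => h.2, pr_eq_zero_of_imp hμ h0.symm fun ω h => h.2]
    simp
  · obtain ⟨ω₁, hH₁, hμ₁⟩ := exists_pos_of_pr_pos hpos₀
    have hg : 0 < g := by simpa only [hH₁] using hpos ω₁ hμ₁
    rw [pr_and_eq_cpr_mul _ hpos₀.ne', pr_and_eq_cpr_mul _ hpos₀.ne', hind ω₀ hpos₀, ← hg_def]
    field_simp

end FiniteProbability

section Regimes

variable {Ω 𝒜 ℒ : Type} {A : ℕ → Ω → 𝒜} {L : ℕ → Ω → ℒ}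

def history (A : ℕ → Ω → 𝒜) (L : ℕ → Ω → ℒ) (k : ℕ) (ω : Ω) :
    (Set.Iio k → 𝒜) × (Set.Iic k → ℒ) :=
  (fun i => A i ω, fun i => L i ω)

lemma history_eq_iff {k : ℕ} {ω ω' : Ω} :
    history A L k ω = history A L k ω' ↔
      (∀ i < k, A i ω = A i ω') ∧ (∀ i ≤ k, L i ω = L i ω') := by
  simp [history, funext_iff]

lemma history_eq_of_le {j k : ℕ} (hjk : j ≤ k) {ω ω' : Ω}
    (h : history A L k ω = history A L k ω') : history A L j ω = history A L j ω' := by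
  rw [history_eq_iff] at h ⊢
  exact ⟨fun i hi => h.1 i (by omega), fun i hi => h.2 i (by omega)⟩

lemma counterfactual_congr {CL : (ℕ → 𝒜) → ℕ → Ω → ℒ} {u k : ℕ} {p : ℕ → 𝒜} {ω ω' : Ω}
    (hA : ∀ i < u, A i ω = A i ω') (hX : (fun a j => CL a j ω) = fun a j => CL a j ω') :
    CL (fun i => if i < u then A i ω else p i) k ω =
      CL (fun i => if i < u then A i ω' else p i) k ω' := by
  have hregime :
      (fun i => if i < u then A i ω else p i) = fun i => if i < u then A i ω' else p i := by
    funext i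
    split_ifs with hi
    · exact hA i hi
    · rfl
  rw [hregime]
  exact congrFun (congrFun hX _) k

lemma observed_eq_counterfactual {CL : (ℕ → 𝒜) → ℕ → Ω → ℒ}
    (hTO : ∀ (a a' : ℕ → 𝒜) (j : ℕ), (∀ i < j, a i = a' i) → ∀ ω, CL a j ω = CL a' j ω)
    (hcons : ∀ j ω, L j ω = CL (fun i => A i ω) j ω) {u k : ℕ} {p : ℕ → 𝒜} {ω : Ω}
    (h : ∀ j ∈ Ico u k, A j ω = p j) :
    L k ω = CL (fun i => if i < u then A i ω else p i) k ω := by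
  rw [hcons]
  refine hTO _ _ k (fun i hi => ?_) ω
  split_ifs with hiu
  · rfl
  · exact h i (mem_Ico.mpr ⟨not_lt.mp hiu, hi⟩)

variable [Fintype Ω] {μ : Ω → ℝ}

def propensity (μ : Ω → ℝ) (A : ℕ → Ω → 𝒜) (L : ℕ → Ω → ℒ) (j : ℕ) (ω : Ω) : ℝ :=
  cpr μ (fun ω' => A j ω' = A j ω) (fun ω' => history A L j ω' = history A L j ω)

lemma propensity_eq_cpr (j : ℕ) (ω : Ω) :
    propensity μ A L j ω = cpr μ (fun ω' => A j ω' = A j ω)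
      (fun ω' => (∀ i < j, A i ω' = A i ω) ∧ (∀ i ≤ j, L i ω' = L i ω)) := by
  simp only [propensity, history_eq_iff]

lemma propensity_congr {j : ℕ} {ω ω' : Ω} (hA : A j ω = A j ω')
    (hH : history A L j ω = history A L j ω') : propensity μ A L j ω = propensity μ A L j ω' := by
  simp only [propensity, hA, hH]

def regimeWeight (μ : Ω → ℝ) (A : ℕ → Ω → 𝒜) (L : ℕ → Ω → ℒ) (u : ℕ) (p : ℕ → 𝒜) (k : ℕ)
    (ω : Ω) : ℝ :=
  ∏ j ∈ Ico u k, if A j ω = p j then (propensity μ A L j ω)⁻¹ else 0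

lemma regimeWeight_mul_eq_ite (u : ℕ) (p : ℕ → 𝒜) (k : ℕ) (ω : Ω) (c : ℝ) :
    regimeWeight μ A L u p k ω * c = if ∀ j ∈ Ico u k, A j ω = p j
      then c / ∏ j ∈ Ico u k, propensity μ A L j ω else 0 := by
  split_ifs with h
  · rw [regimeWeight, div_eq_inv_mul, ← prod_inv_distrib]
    exact congrArg (· * c) (prod_congr rfl fun j hj => if_pos (h j hj))
  · push Not at h
    obtain ⟨j, hj, hne⟩ := h
    rw [regimeWeight, prod_eq_zero hj (if_neg hne), zero_mul]

lemma regimeWeight_congr {u k : ℕ} (p : ℕ → 𝒜) {ω ω' : Ω}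
    (h : history A L k ω = history A L k ω') :
    regimeWeight μ A L u p k ω = regimeWeight μ A L u p k ω' := by
  refine prod_congr rfl fun j hj => ?_
  have hjk : j < k := (mem_Ico.mp hj).2
  rw [(history_eq_iff.mp h).1 j hjk,
    propensity_congr ((history_eq_iff.mp h).1 j hjk) (history_eq_of_le hjk.le h)]

theorem ex_regimeWeight_mul {γ : Type} (hμ : ∀ ω, 0 ≤ μ ω) {u k : ℕ} (huk : u ≤ k)
    (p : ℕ → 𝒜) {X : Ω → γ}
    (hind : ∀ j ∈ Ico u k, ∀ ω₀, 0 < pr μ (fun ω => history A L j ω = history A L j ω₀) →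
      cpr μ (fun ω => A j ω = p j ∧ X ω = X ω₀) (fun ω => history A L j ω = history A L j ω₀) =
        cpr μ (fun ω => A j ω = p j) (fun ω => history A L j ω = history A L j ω₀) *
          cpr μ (fun ω => X ω = X ω₀) (fun ω => history A L j ω = history A L j ω₀))
    (hpos : ∀ j ∈ Ico u k, ∀ ω, 0 < μ ω →
      0 < cpr μ (fun ω' => A j ω' = p j) (fun ω' => history A L j ω' = history A L j ω))
    {Z : Ω → ℝ} (hZ : ∀ ω ω', history A L u ω = history A L u ω' → X ω = X ω' → Z ω = Z ω') :
    ex μ (fun ω => regimeWeight μ A L u p k ω * Z ω) = ex μ Z := by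
  induction k, huk using Nat.le_induction with
  | base => simp [regimeWeight]
  | succ k huk ih =>
    have hk : k ∈ Ico u (k + 1) := mem_Ico.mpr ⟨huk, k.lt_succ_self⟩
    have peel : ∀ ω, regimeWeight μ A L u p (k + 1) ω * Z ω =
        if A k ω = p k then regimeWeight μ A L u p k ω * Z ω / propensity μ A L k ω else 0 := by
      intro ω
      rw [regimeWeight, prod_Ico_succ_top huk, ← regimeWeight]
      split_ifs <;> ring
    have hf : ∀ ω ω', history A L k ω = history A L k ω' → X ω = X ω' →
        regimeWeight μ A L u p k ω * Z ω = regimeWeight μ A L u p k ω' * Z ω' :=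
      fun ω ω' hH hX => by rw [regimeWeight_congr p hH, hZ ω ω' (history_eq_of_le huk hH) hX]
    simp only [peel]
    rw [← ih (fun j hj => hind j (Ico_subset_Ico_right k.le_succ hj))
      (fun j hj => hpos j (Ico_subset_Ico_right k.le_succ hj))]
    exact ex_ite_div_cpr_eq_ex hμ (hind k hk) (hpos k hk) hf

end Regimes

theorem hrmsm_iptw_unbiased_general
    {Ω 𝒜 ℒ 𝒱 : Type} [Fintype Ω]
    (μ : Ω → ℝ) (hμ : ∀ ω, 0 ≤ μ ω)
    (K s : ℕ)
    (A : ℕ → Ω → 𝒜) (CL : (ℕ → 𝒜) → ℕ → Ω → ℒ) (L : ℕ → Ω → ℒ) (Y : ℒ → ℝ)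
    (hTO : ∀ (a a' : ℕ → 𝒜) (j : ℕ), (∀ i < j, a i = a' i) → ∀ ω, CL a j ω = CL a' j ω)
    (hcons : ∀ j ω, L j ω = CL (fun i => A i ω) j ω)
    (SRA : ∀ j ≤ K, ∀ (a : 𝒜) (x : (ℕ → 𝒜) → ℕ → ℒ) (ab : ℕ → 𝒜) (lb : ℕ → ℒ),
      pr μ (fun ω => (∀ i < j, A i ω = ab i) ∧ (∀ i ≤ j, L i ω = lb i)) > 0 →
      cpr μ (fun ω => A j ω = a ∧ ∀ (ar : ℕ → 𝒜) (jj : ℕ), CL ar jj ω = x ar jj)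
        (fun ω => (∀ i < j, A i ω = ab i) ∧ (∀ i ≤ j, L i ω = lb i)) =
      cpr μ (fun ω => A j ω = a)
        (fun ω => (∀ i < j, A i ω = ab i) ∧ (∀ i ≤ j, L i ω = lb i)) *
      cpr μ (fun ω => ∀ (ar : ℕ → 𝒜) (jj : ℕ), CL ar jj ω = x ar jj)
        (fun ω => (∀ i < j, A i ω = ab i) ∧ (∀ i ≤ j, L i ω = lb i)))
    (t : ℕ) (ht2 : t ≤ K)
    (POS : ∀ j, t + 1 - s ≤ j → j ≤ t → ∀ (a : 𝒜) (ω : Ω), μ ω > 0 →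
      cpr μ (fun ω' => A j ω' = a)
        (fun ω' => (∀ i < j, A i ω' = A i ω) ∧ (∀ i ≤ j, L i ω' = L i ω)) > 0)
    (V : Ω → 𝒱)
    (hV : ∀ ω ω', (∀ i < t + 1 - s, A i ω = A i ω') →
      (∀ i ≤ t + 1 - s, L i ω = L i ω') → V ω = V ω')
    (m : (ℕ → 𝒜) → 𝒱 → ℝ)
    (hm : ∀ (a a' : ℕ → 𝒜) (v : 𝒱), (∀ i, t + 1 - s ≤ i → i ≤ t → a i = a' i) →
      m a v = m a' v)
    (hmodel : ∀ (ab : ℕ → 𝒜) (v : 𝒱), pr μ (fun ω => V ω = v) > 0 →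
      cex μ (fun ω => Y (CL (fun i => if i < t + 1 - s then A i ω else ab i) (t + 1) ω))
        (fun ω => V ω = v) = m ab v)
    (h : (ℕ → 𝒜) → 𝒱 → ℝ)
    (hh : ∀ (a a' : ℕ → 𝒜) (v : 𝒱), (∀ i, t + 1 - s ≤ i → i ≤ t → a i = a' i) →
      h a v = h a' v) :
    ex μ (fun ω => h (fun i => A i ω) (V ω) *
      (Y (L (t + 1) ω) - m (fun i => A i ω) (V ω)) /
      ∏ j ∈ Finset.Ico (t + 1 - s) (t + 1),
        cpr μ (fun ω' => A j ω' = A j ω)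
          (fun ω' => (∀ i < j, A i ω' = A i ω) ∧ (∀ i ≤ j, L i ω' = L i ω))) = 0 := by
  set u := t + 1 - s
  simp only [← propensity_eq_cpr]
  refine ex_eq_zero_of_fiberwise (fun ω (j : Ico u (t + 1)) => A j ω) fun ω₀ => ?_
  set p : ℕ → 𝒜 := fun i => A i ω₀
  set Z : Ω → ℝ := fun ω =>
    h p (V ω) * (Y (CL (fun i => if i < u then A i ω else p i) (t + 1) ω) - m p (V ω))
  have hZ : ∀ ω ω', history A L u ω = history A L u ω' →
      (fun a j => CL a j ω) = (fun a j => CL a j ω') → Z ω = Z ω' := fun ω ω' hH hX => by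
    obtain ⟨hA, hL⟩ := history_eq_iff.mp hH
    simp only [Z, hV ω ω' hA hL, counterfactual_congr hA hX]
  calc ex μ _ = ex μ (fun ω => regimeWeight μ A L u p (t + 1) ω * Z ω) := by
        congr 1
        funext ω
        have hw : ((fun j : Ico u (t + 1) => A j ω) = fun j : Ico u (t + 1) => A j ω₀) ↔
            ∀ j ∈ Ico u (t + 1), A j ω = p j := by
          simp [funext_iff, p]
        simp only [hw, regimeWeight_mul_eq_ite]
        split_ifs with hwin
        · have hwin' : ∀ i, u ≤ i → i ≤ t → A i ω = p i :=
            fun i hi₁ hi₂ => hwin i (mem_Ico.mpr ⟨hi₁, by omega⟩)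
          rw [hh _ p _ hwin', hm _ p _ hwin', observed_eq_counterfactual hTO hcons hwin]
        · rfl
    _ = ex μ Z := ex_regimeWeight_mul hμ (Nat.sub_le _ _) p
        (fun j hj ω₁ => by
          simpa [history_eq_iff, funext_iff] using
            SRA j (by grind) (p j) (fun a i => CL a i ω₁) (fun i => A i ω₁) (fun i => L i ω₁))
        (fun j hj ω hω => by simpa [history_eq_iff] using POS j (by grind) (by grind) (p j) ω hω) hZ
    _ = 0 := ex_mul_sub_eq_zero_of_cex_eq hμ (h p) (hmodel p)

/-- Unbiasedness of the IPTW estimating function for a stratified,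
correctly specified HRMSM. -/
theorem hrmsm_iptw_unbiased
    {Ω 𝒜 ℒ 𝒱 : Type} [Fintype Ω]
    (μ : Ω → ℝ) (hμ : ∀ ω, 0 ≤ μ ω) (hsum : ∑ ω, μ ω = 1)
    (K s : ℕ) (hs : 1 ≤ s) (hsK : s ≤ K + 1)
    (A : ℕ → Ω → 𝒜) (CL : (ℕ → 𝒜) → ℕ → Ω → ℒ) (L : ℕ → Ω → ℒ) (Y : ℒ → ℝ)
    (hTO : ∀ (a a' : ℕ → 𝒜) (j : ℕ), (∀ i < j, a i = a' i) → ∀ ω, CL a j ω = CL a' j ω)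
    (hcons : ∀ j ω, L j ω = CL (fun i => A i ω) j ω)
    (SRA : ∀ j ≤ K, ∀ (a : 𝒜) (x : (ℕ → 𝒜) → ℕ → ℒ) (ab : ℕ → 𝒜) (lb : ℕ → ℒ),
      pr μ (fun ω => (∀ i < j, A i ω = ab i) ∧ (∀ i ≤ j, L i ω = lb i)) > 0 →
      cpr μ (fun ω => A j ω = a ∧ ∀ (ar : ℕ → 𝒜) (jj : ℕ), CL ar jj ω = x ar jj)
        (fun ω => (∀ i < j, A i ω = ab i) ∧ (∀ i ≤ j, L i ω = lb i)) =
      cpr μ (fun ω => A j ω = a)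
        (fun ω => (∀ i < j, A i ω = ab i) ∧ (∀ i ≤ j, L i ω = lb i)) *
      cpr μ (fun ω => ∀ (ar : ℕ → 𝒜) (jj : ℕ), CL ar jj ω = x ar jj)
        (fun ω => (∀ i < j, A i ω = ab i) ∧ (∀ i ≤ j, L i ω = lb i)))
    (t : ℕ) (ht1 : s - 1 ≤ t) (ht2 : t ≤ K)
    (POS : ∀ j, t + 1 - s ≤ j → j ≤ t → ∀ (a : 𝒜) (ω : Ω), μ ω > 0 →
      cpr μ (fun ω' => A j ω' = a)
        (fun ω' => (∀ i < j, A i ω' = A i ω) ∧ (∀ i ≤ j, L i ω' = L i ω)) > 0)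
    (V : Ω → 𝒱)
    (hV : ∀ ω ω', (∀ i < t + 1 - s, A i ω = A i ω') →
      (∀ i ≤ t + 1 - s, L i ω = L i ω') → V ω = V ω')
    (m : (ℕ → 𝒜) → 𝒱 → ℝ)
    (hm : ∀ (a a' : ℕ → 𝒜) (v : 𝒱), (∀ i, t + 1 - s ≤ i → i ≤ t → a i = a' i) →
      m a v = m a' v)
    (hmodel : ∀ (ab : ℕ → 𝒜) (v : 𝒱), pr μ (fun ω => V ω = v) > 0 →
      cex μ (fun ω => Y (CL (fun i => if i < t + 1 - s then A i ω else ab i) (t + 1) ω))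
        (fun ω => V ω = v) = m ab v)
    (h : (ℕ → 𝒜) → 𝒱 → ℝ)
    (hh : ∀ (a a' : ℕ → 𝒜) (v : 𝒱), (∀ i, t + 1 - s ≤ i → i ≤ t → a i = a' i) →
      h a v = h a' v) :
    ex μ (fun ω => h (fun i => A i ω) (V ω) *
      (Y (L (t + 1) ω) - m (fun i => A i ω) (V ω)) /
      ∏ j ∈ Finset.Ico (t + 1 - s) (t + 1),
        cpr μ (fun ω' => A j ω' = A j ω)
          (fun ω' => (∀ i < j, A i ω' = A i ω) ∧ (∀ i ≤ j, L i ω' = L i ω))) = 0 :=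
  hrmsm_iptw_unbiased_general μ hμ K s A CL L Y hTO hcons SRA t ht2 POS V hV m hm hmodel h hh
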